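/- arXiv:0802.0194 — 2 statements merged into one kernel-verified Lean document; each statement's English description precedes it below -/
import Mathlib

section
/- Let n ≥ 2 and let x_1, …, x_n ∈ ℝ with s_1 = Σ_{i=1}^n x_i and s_2 = Σ_{i=1}^n x_i^2. Then for every index j, ( s_1 − √((n−1)(n s_2 − s_1^2)) )/n ≤ x_j ≤ ( s_1 + √((n−1)(n s_2 − s_1^2)) )/n; in particular n s_2 − s_1^2 ≥ 0 and |n x_j − s_1| ≤ √((n−1)(n s_2 − s_1^2)). -/
/-!
Removing `x j` from the tuple and applying Cauchy–Schwarz to the remaining `n - 1` coordinates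
gives `(s₁ - x j)² ≤ (n - 1)(s₂ - x j²)`, which rearranges to
`(n x j - s₁)² ≤ (n - 1)(n s₂ - s₁²)`.
-/

open Finset

section PowerSums

variable {ι α : Type*} [CommRing α] [LinearOrder α] [IsStrictOrderedRing α]

theorem sq_card_mul_sub_sum_le [DecidableEq ι] {s : Finset ι} {j : ι} (hj : j ∈ s) (f : ι → α) :
    (#s * f j - ∑ i ∈ s, f i) ^ 2 ≤
      (#s - 1) * (#s * ∑ i ∈ s, f i ^ 2 - (∑ i ∈ s, f i) ^ 2) := by
  have hcard : (#s : α) = #(s.erase j) + 1 := by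
    rw [← card_erase_add_one hj]; push_cast; ring
  have hCS := sq_sum_le_card_mul_sum_sq (s := s.erase j) (f := f)
  rw [hcard, ← add_sum_erase s f hj, ← add_sum_erase s (f · ^ 2) hj]
  set m : α := (#(s.erase j) : α)
  set a := ∑ i ∈ s.erase j, f i
  set b := ∑ i ∈ s.erase j, f i ^ 2
  -- the difference of the two sides is `(m + 1) (m b - a²)`
  nlinarith [mul_le_mul_of_nonneg_left hCS (by positivity : (0 : α) ≤ m + 1)]

end PowerSums

theorem coordinate_bound_from_power_sums_general (n : ℕ)
    (x : Fin n → ℝ) (s₁ s₂ : ℝ)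
    (hs₁ : s₁ = ∑ i, x i) (hs₂ : s₂ = ∑ i, (x i) ^ 2) (j : Fin n) :
    (s₁ - Real.sqrt ((n - 1) * (n * s₂ - s₁ ^ 2))) / n ≤ x j ∧
    x j ≤ (s₁ + Real.sqrt ((n - 1) * (n * s₂ - s₁ ^ 2))) / n ∧
    0 ≤ n * s₂ - s₁ ^ 2 ∧
    |n * x j - s₁| ≤ Real.sqrt ((n - 1) * (n * s₂ - s₁ ^ 2)) := by
  have hsq := sq_card_mul_sub_sum_le (mem_univ j) x
  rw [card_univ, Fintype.card_fin, ← hs₁, ← hs₂] at hsq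
  have habs : |n * x j - s₁| ≤ Real.sqrt ((n - 1) * (n * s₂ - s₁ ^ 2)) := Real.abs_le_sqrt hsq
  obtain ⟨hlow, hupp⟩ := abs_le.1 habs
  have hn : (0 : ℝ) < n := by exact_mod_cast j.pos
  refine ⟨?_, ?_, ?_, habs⟩
  · rw [div_le_iff₀ hn]; linarith
  · rw [le_div_iff₀ hn]; linarith
  · simpa [hs₁, hs₂] using sub_nonneg.2 (sq_sum_le_card_mul_sum_sq (s := univ) (f := x))

/-- Let `n ≥ 2` and `x_1, …, x_n ∈ ℝ` with power sums `s₁ = Σ xᵢ` and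
`s₂ = Σ xᵢ²`.  Then every coordinate `x_j` satisfies
`(s₁ − √((n−1)(n s₂ − s₁²)))/n ≤ x_j ≤ (s₁ + √((n−1)(n s₂ − s₁²)))/n`;
in particular `n s₂ − s₁² ≥ 0` and `|n x_j − s₁| ≤ √((n−1)(n s₂ − s₁²))`. -/
theorem coordinate_bound_from_power_sums (n : ℕ) (hn : 2 ≤ n)
    (x : Fin n → ℝ) (s₁ s₂ : ℝ)
    (hs₁ : s₁ = ∑ i, x i) (hs₂ : s₂ = ∑ i, (x i) ^ 2) (j : Fin n) :
    (s₁ - Real.sqrt ((n - 1) * (n * s₂ - s₁ ^ 2))) / n ≤ x j ∧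
    x j ≤ (s₁ + Real.sqrt ((n - 1) * (n * s₂ - s₁ ^ 2))) / n ∧
    0 ≤ n * s₂ - s₁ ^ 2 ∧
    |n * x j - s₁| ≤ Real.sqrt ((n - 1) * (n * s₂ - s₁ ^ 2)) :=
  coordinate_bound_from_power_sums_general n x s₁ s₂ hs₁ hs₂ j
end

section
/- Let 1 ≤ k < n, let s_1, …, s_k ∈ ℝ, and let V = { y ∈ ℝ^n : Σ_{j=1}^n y_j^i = s_i for i = 1, …, k }. If x ∈ V is a point at which the coordinate function y ↦ y_n attains a local minimum or local maximum on V, then the values x_1, …, x_{n−1} take at most k − 1 distinct values; that is, the set {x_1, …, x_{n−1}} has cardinality at most k − 1. -/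
/-!
At a constrained extremum the Lagrange multiplier rule gives `(Λ, Λ₀) ≠ 0` with
`∑ᵢ Λᵢ ∇S_{i+1}(x) + Λ₀ eₙ = 0`. The `j`-th coordinate of this relation, for `j < n`, says
that `x_j` is a root of `p(t) = ∑ᵢ (i + 1) Λᵢ tⁱ`, a polynomial of degree `< k`; it is nonzero
because `Λ = 0` would force `Λ₀ = 0` through the `n`-th coordinate. So `x_1, …, x_{n-1}` take
at most `k - 1` values.
-/

open Polynomial

theorem Polynomial.coeff_sum_fin_C_mul_X_pow {R : Type*} [Semiring R] {k : ℕ} (c : Fin k → R)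
    (i : Fin k) : (∑ j : Fin k, C (c j) * X ^ (j : ℕ)).coeff i = c i := by
  simp [Fin.val_inj]

theorem Polynomial.sum_fin_C_mul_X_pow_ne_zero {R : Type*} [Semiring R] {k : ℕ} {c : Fin k → R}
    (hc : c ≠ 0) : ∑ j : Fin k, C (c j) * X ^ (j : ℕ) ≠ 0 := by
  obtain ⟨i, hi⟩ := Function.ne_iff.mp hc
  intro h
  apply hi
  rw [← coeff_sum_fin_C_mul_X_pow c i, h, coeff_zero, Pi.zero_apply]

variable {ι : Type*} [Fintype ι]

theorem hasStrictFDerivAt_sum_pow {𝕜 : Type*} [NontriviallyNormedField 𝕜] (d : ℕ) (x : ι → 𝕜) :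
    HasStrictFDerivAt (fun y : ι → 𝕜 => ∑ j, y j ^ d)
      (∑ j, ((d : 𝕜) * x j ^ (d - 1)) •
        ContinuousLinearMap.proj (R := 𝕜) (φ := fun _ : ι => 𝕜) j) x :=
  HasStrictFDerivAt.fun_sum fun j _ =>
    (hasStrictDerivAt_pow d (x j)).comp_hasStrictFDerivAt x (hasStrictFDerivAt_apply j x)

theorem IsLocalExtrOn.exists_poly_isRoot_of_powerSums {k : ℕ} {x : ι → ℝ} {m : ι}
    (h : IsLocalExtrOn (fun y : ι → ℝ => y m)
      {y | ∀ i : Fin k, ∑ j, y j ^ ((i : ℕ) + 1) = ∑ j, x j ^ ((i : ℕ) + 1)} x) :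
    ∃ p : ℝ[X], p ≠ 0 ∧ p.degree < k ∧ ∀ j ≠ m, p.IsRoot (x j) := by
  classical
  obtain ⟨Λ, Λ₀, hΛ, hrel⟩ := h.exists_multipliers_of_hasStrictFDerivAt
    (fun i => hasStrictFDerivAt_sum_pow ((i : ℕ) + 1) x) (hasStrictFDerivAt_apply m x)
  -- the multiplier relation evaluated at the basis vector `e_j`
  have hcoord : ∀ j, ∑ i, Λ i * (((i : ℕ) + 1 : ℝ) * x j ^ (i : ℕ)) +
      Λ₀ * Pi.single (M := fun _ : ι => ℝ) j 1 m = 0 := fun j => by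
    simpa [Pi.single_apply, Finset.mul_sum, mul_ite, Finset.sum_ite_eq']
      using DFunLike.congr_fun hrel (Pi.single j 1)
  have hΛ' : Λ ≠ 0 := by
    rintro rfl
    have hΛ₀ : Λ₀ = 0 := by simpa using hcoord m
    exact hΛ (by simp [hΛ₀])
  refine ⟨∑ i : Fin k, C (Λ i * ((i : ℕ) + 1)) * X ^ (i : ℕ), sum_fin_C_mul_X_pow_ne_zero ?_,
    degree_sum_fin_lt _, fun j hj => ?_⟩
  · obtain ⟨i, hi⟩ := Function.ne_iff.mp hΛ'
    exact Function.ne_iff.mpr ⟨i, mul_ne_zero hi (by positivity)⟩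
  · simpa [eval_finsetSum, hj, mul_assoc] using hcoord j

theorem setOf_powerSums_eq {R : Type*} [CommSemiring R] {k : ℕ} {s : ℕ → R} {x : ι → R}
    (hx : ∀ i, 1 ≤ i → i ≤ k → ∑ j, x j ^ i = s i) :
    {y : ι → R | ∀ i, 1 ≤ i → i ≤ k → ∑ j, y j ^ i = s i} =
      {y | ∀ i : Fin k, ∑ j, y j ^ ((i : ℕ) + 1) = ∑ j, x j ^ ((i : ℕ) + 1)} := by
  ext y
  refine ⟨fun hy i => ?_, fun hy i hi hik => ?_⟩
  · rw [hy _ le_add_self i.isLt, hx _ le_add_self i.isLt]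
  · obtain ⟨i, rfl⟩ := Nat.exists_eq_add_of_le' hi
    rw [hy ⟨i, hik⟩, hx _ hi hik]

/-- Lagrange-multiplier structure of extrema of the last coordinate on the set
`V` of real `n`-tuples with prescribed first `k` power sums: if the coordinate
function `y ↦ y_n` attains a local minimum or maximum on `V` at `x`, then the
first `n − 1` coordinates `x_1, …, x_{n−1}` take at most `k − 1` distinct
values. -/
theorem lagrange_power_sum_extremum (n k : ℕ) (hkn : k < n)
    (s : ℕ → ℝ)
    (V : Set (Fin n → ℝ))
    (hV : V = {y : Fin n → ℝ | ∀ i : ℕ, 1 ≤ i → i ≤ k → ∑ j, (y j) ^ i = s i})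
    (x : Fin n → ℝ) (hx : x ∈ V)
    (hext : IsLocalMinOn (fun y : Fin n → ℝ => y ⟨n - 1, by omega⟩) V x ∨
            IsLocalMaxOn (fun y : Fin n → ℝ => y ⟨n - 1, by omega⟩) V x) :
    ((Finset.univ.filter (fun j : Fin n => (j : ℕ) < n - 1)).image
      (fun j => x j)).card ≤ k - 1 := by
  subst hV
  obtain ⟨p, hp, hdeg, hroot⟩ :=
    IsLocalExtrOn.exists_poly_isRoot_of_powerSums (setOf_powerSums_eq hx ▸ hext)
  have hsub : ((Finset.univ.filter (fun j : Fin n => (j : ℕ) < n - 1)).image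
      (fun j => x j)).val ⊆ p.roots := by
    intro a ha
    obtain ⟨j, hj, rfl⟩ := Finset.mem_image.mp (Finset.mem_val.mp ha)
    exact (mem_roots hp).mpr (hroot j (Fin.ne_of_val_ne (Finset.mem_filter.mp hj).2.ne))
  have hcard := card_le_degree_of_subset_roots hsub
  have hnatDeg := (natDegree_lt_iff_degree_lt hp).mpr hdeg
  omega
end
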